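/- Let ε > 0 and suppose G has t ≥ 1 triangles. If |H| ≤ 3·(εt)^{1/3}, then (1 − 9ε)·t ≤ Σ_{v ∈ L} Σ_{e ∈ δ(v)} wt(T_e) ≤ t. -/

import Mathlib

/-!
Each triangle `Δ` meeting `L` in `ℓ ≥ 1` vertices is counted through `2ℓ` pairs (light vertex
`v ∈ Δ`, edge of `Δ` at `v`), each with weight `1/(2ℓ)`, so the double sum counts exactly the
triangles with a light vertex: at most `t`. The others lie inside `H`, so there are at most
`|H|³/6 ≤ 27εt/6 ≤ 9εt` of them.
-/

open Finset SimpleGraph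
open scoped Classical

/-- The set `T_e` of triangles of `G` containing the edge `e`. -/
noncomputable def Te {V : Type*} [Fintype V] [DecidableEq V] (G : SimpleGraph V)
    [DecidableRel G.Adj] (e : Sym2 V) : Finset (Finset V) :=
  (G.cliqueFinset 3).filter (fun Δ => ∀ x ∈ e, x ∈ Δ)

/-- The weight of a triangle `Δ`: `0` if `Δ` contains no vertex of the light set `L`,
and `1/(2ℓ)` if it contains exactly `ℓ ≥ 1` vertices of `L`. -/
noncomputable def wtTri {V : Type*} [DecidableEq V] (L : Finset V) (Δ : Finset V) : ℝ :=
  if (Δ ∩ L) = ∅ then 0 else 1 / (2 * ((Δ ∩ L).card : ℝ))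

/-- The weight of a set of triangles: `wt(T) = Σ_{Δ ∈ T} wt(Δ)`. -/
noncomputable def wtSet {V : Type*} [DecidableEq V] (L : Finset V)
    (T : Finset (Finset V)) : ℝ :=
  ∑ Δ ∈ T, wtTri L Δ

namespace SimpleGraph

variable {V : Type*} [Fintype V] [DecidableEq V] (G : SimpleGraph V) [DecidableRel G.Adj]

theorem filter_incidenceFinset_subset_eq_image {s : Finset V} (hs : G.IsClique (s : Set V))
    {v : V} (hv : v ∈ s) :
    {e ∈ G.incidenceFinset v | ∀ x ∈ e, x ∈ s} = (s.erase v).image (fun u => s(v, u)) := by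
  ext e
  simp only [mem_filter, mem_image, mem_incidenceFinset]
  constructor
  · rintro ⟨he, hall⟩
    induction e using Sym2.ind with
    | _ a b =>
      obtain ⟨hab, rfl | rfl⟩ := (G.mk'_mem_incidenceSet_iff).1 he
      · exact ⟨b, mem_erase.2 ⟨hab.ne.symm, hall b (Sym2.mem_mk_right _ _)⟩, rfl⟩
      · exact ⟨a, mem_erase.2 ⟨hab.ne, hall a (Sym2.mem_mk_left _ _)⟩, Sym2.eq_swap⟩
  · rintro ⟨u, hu, rfl⟩
    obtain ⟨hne, hus⟩ := mem_erase.1 hu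
    refine ⟨G.mk'_mem_incidenceSet_left_iff.2 (hs hv hus (Ne.symm hne)), fun x hx => ?_⟩
    rcases Sym2.mem_iff.1 hx with rfl | rfl
    · exact hv
    · exact hus

theorem card_filter_incidenceFinset_subset {n : ℕ} {s : Finset V} (hs : G.IsNClique n s)
    (v : V) :
    #{e ∈ G.incidenceFinset v | ∀ x ∈ e, x ∈ s} = if v ∈ s then n - 1 else 0 := by
  split_ifs with hv
  · rw [G.filter_incidenceFinset_subset_eq_image hs.isClique hv,
      card_image_of_injective _ (fun _ _ => Sym2.congr_right.1), card_erase_of_mem hv,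
      hs.card_eq]
  · exact card_eq_zero.2 <| filter_eq_empty_iff.2 fun e he hall =>
      hv (hall v ((G.mem_incidenceFinset v e).1 he).2)

theorem card_filter_cliqueFinset_subset_le (n : ℕ) (H : Finset V) :
    #{s ∈ G.cliqueFinset n | s ⊆ H} ≤ (#H).choose n := by
  rw [← card_powersetCard]
  refine card_le_card fun s hs => ?_
  obtain ⟨hs, hsH⟩ := mem_filter.1 hs
  exact mem_powersetCard.2 ⟨hsH, ((G.mem_cliqueFinset_iff).1 hs).card_eq⟩

end SimpleGraph

theorem two_mul_card_inter_mul_wtTri {V : Type*} [DecidableEq V] (L Δ : Finset V) :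
    2 * (#(Δ ∩ L) : ℝ) * wtTri L Δ = if (Δ ∩ L).Nonempty then 1 else 0 := by
  rcases (Δ ∩ L).eq_empty_or_nonempty with hempty | hne
  · simp [wtTri, hempty]
  · have : (0 : ℝ) < #(Δ ∩ L) := by exact_mod_cast card_pos.2 hne
    rw [wtTri, if_neg hne.ne_empty, if_pos hne]
    field_simp

theorem sum_incidenceFinset_wtSet_Te {V : Type*} [Fintype V] [DecidableEq V]
    (G : SimpleGraph V) [DecidableRel G.Adj] (L : Finset V) :
    ∑ v ∈ L, ∑ e ∈ G.incidenceFinset v, wtSet L (Te G e)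
      = #{Δ ∈ G.cliqueFinset 3 | (Δ ∩ L).Nonempty} := by
  have hedges (Δ : Finset V) (hΔ : Δ ∈ G.cliqueFinset 3) (v : V) :
      ∑ e ∈ G.incidenceFinset v, (if ∀ x ∈ e, x ∈ Δ then wtTri L Δ else 0)
        = (if v ∈ Δ then 2 else 0) * wtTri L Δ := by
    rw [← sum_filter, sum_const,
      G.card_filter_incidenceFinset_subset ((G.mem_cliqueFinset_iff).1 hΔ) v]
    split_ifs <;> simp
  calc ∑ v ∈ L, ∑ e ∈ G.incidenceFinset v, wtSet L (Te G e)
      = ∑ Δ ∈ G.cliqueFinset 3, ∑ v ∈ L, ∑ e ∈ G.incidenceFinset v,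
          (if ∀ x ∈ e, x ∈ Δ then wtTri L Δ else 0) := by
        simp only [wtSet, Te, sum_filter]
        exact (sum_congr rfl fun v _ => sum_comm).trans sum_comm
    _ = ∑ Δ ∈ G.cliqueFinset 3, 2 * (#(Δ ∩ L) : ℝ) * wtTri L Δ := by
        refine sum_congr rfl fun Δ hΔ => ?_
        rw [sum_congr rfl fun v _ => hedges Δ hΔ v, ← sum_mul, sum_ite_mem, sum_const,
          inter_comm, nsmul_eq_mul, mul_comm (#(Δ ∩ L) : ℝ)]
    _ = #{Δ ∈ G.cliqueFinset 3 | (Δ ∩ L).Nonempty} := by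
        simp only [two_mul_card_inter_mul_wtTri, sum_boole]

theorem pow_three_le_of_le_mul_rpow_one_div_three {x y c : ℝ} (hx : 0 ≤ x) (hy : 0 ≤ y)
    (hxy : x ≤ c * y ^ ((1 : ℝ) / 3)) : x ^ 3 ≤ c ^ 3 * y := by
  calc x ^ 3 ≤ (c * y ^ ((1 : ℝ) / 3)) ^ 3 := pow_le_pow_left₀ hx hxy 3
    _ = c ^ 3 * y := by
        rw [mul_pow, ← Real.rpow_natCast (y ^ _), ← Real.rpow_mul hy]
        norm_num

theorem stmt7_general {V : Type*} [Fintype V] [DecidableEq V] (G : SimpleGraph V)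
    [DecidableRel G.Adj] (ε : ℝ) (hε : 0 < ε)
    (L H : Finset V) (hHL : ∀ x, x ∈ H ↔ x ∉ L)
    (hH : (H.card : ℝ) ≤ 3 * (ε * (G.cliqueFinset 3).card) ^ ((1 : ℝ) / 3)) :
    (1 - 9 * ε) * ((G.cliqueFinset 3).card : ℝ)
        ≤ ∑ v ∈ L, ∑ e ∈ G.incidenceFinset v, wtSet L (Te G e) ∧
    ∑ v ∈ L, ∑ e ∈ G.incidenceFinset v, wtSet L (Te G e)
        ≤ ((G.cliqueFinset 3).card : ℝ) := by
  set t := #(G.cliqueFinset 3)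
  have hsplit : (#{Δ ∈ G.cliqueFinset 3 | (Δ ∩ L).Nonempty} : ℝ)
      + #{Δ ∈ G.cliqueFinset 3 | ¬(Δ ∩ L).Nonempty} = t :=
    mod_cast card_filter_add_card_filter_not _
  have hheavy_sub :
      {Δ ∈ G.cliqueFinset 3 | ¬(Δ ∩ L).Nonempty} ⊆ {Δ ∈ G.cliqueFinset 3 | Δ ⊆ H} :=
    monotone_filter_right _ fun Δ _ hΔ x hx =>
      (hHL x).2 fun hxL => hΔ ⟨x, mem_inter.2 ⟨hx, hxL⟩⟩
  have hheavy : (#{Δ ∈ G.cliqueFinset 3 | ¬(Δ ∩ L).Nonempty} : ℝ) ≤ (#H : ℝ) ^ 3 / 6 :=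
    calc (#{Δ ∈ G.cliqueFinset 3 | ¬(Δ ∩ L).Nonempty} : ℝ)
        ≤ (#H).choose 3 := mod_cast (card_le_card hheavy_sub).trans
          (G.card_filter_cliqueFinset_subset_le 3 H)
      _ ≤ (#H : ℝ) ^ 3 / 6 := by
          simpa [Nat.factorial] using Nat.choose_le_pow_div (α := ℝ) 3 #H
  have hεt : 0 ≤ ε * t := by positivity
  have hcube := pow_three_le_of_le_mul_rpow_one_div_three (Nat.cast_nonneg _) hεt hH
  rw [sum_incidenceFinset_wtSet_Te]
  constructor <;> linarith

/-- Let `ε > 0` and suppose `G` has `t ≥ 1` triangles.  If the vertex set is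
partitioned into heavy vertices `H` and light vertices `L` with `|H| ≤ 3(εt)^{1/3}`, then
`(1 − 9ε)·t ≤ Σ_{v ∈ L} Σ_{e ∈ δ(v)} wt(T_e) ≤ t`. -/
theorem stmt7 {V : Type*} [Fintype V] [DecidableEq V] (G : SimpleGraph V)
    [DecidableRel G.Adj] (ε : ℝ) (hε : 0 < ε)
    (ht : 1 ≤ (G.cliqueFinset 3).card)
    (L H : Finset V) (hHL : ∀ x, x ∈ H ↔ x ∉ L)
    (hH : (H.card : ℝ) ≤ 3 * (ε * (G.cliqueFinset 3).card) ^ ((1 : ℝ) / 3)) :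
    (1 - 9 * ε) * ((G.cliqueFinset 3).card : ℝ)
        ≤ ∑ v ∈ L, ∑ e ∈ G.incidenceFinset v, wtSet L (Te G e) ∧
    ∑ v ∈ L, ∑ e ∈ G.incidenceFinset v, wtSet L (Te G e)
        ≤ ((G.cliqueFinset 3).card : ℝ) :=
  stmt7_general G ε hε L H hHL hH
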